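/- arXiv:2406.00220 — 3 statements merged into one kernel-verified Lean document; each statement's English description precedes it below -/
import Mathlib

section
/- For every v = (v₁,v₂,v₃) ∈ ℝ³ with v₃² < 1, the Lie bracket of the vector fields e₄ and e₅ satisfies [e₄, e₅](v) = (v₃/√(1−v₃²)) · e₅(v). -/
/-- The Lie bracket of two vector fields on a normed space:
`[V,W](x) = DW(x)·V(x) − DV(x)·W(x)`. -/
noncomputable def lieBracket {E : Type*} [NormedAddCommGroup E] [NormedSpace ℝ E]
    (V W : E → E) : E → E :=
  fun x => fderiv ℝ W x (V x) - fderiv ℝ V x (W x)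

/-- `e₄(v) = (1/√(1−v₃²))·(−v₃v₁, −v₃v₂, 1−v₃²)`. -/
noncomputable def e₄ (v : Fin 3 → ℝ) : Fin 3 → ℝ :=
  (Real.sqrt (1 - (v 2) ^ 2))⁻¹ • ![-(v 2) * v 0, -(v 2) * v 1, 1 - (v 2) ^ 2]

/-- `e₅(v) = (1/√(1−v₃²))·(−v₂, v₁, 0)`. -/
noncomputable def e₅ (v : Fin 3 → ℝ) : Fin 3 → ℝ :=
  (Real.sqrt (1 - (v 2) ^ 2))⁻¹ • ![-(v 1), v 0, 0]

/-!
Write `e₄ = φ • X` and `e₅ = φ • J` with `φ(v) = (1 - v₃²)^(-1/2)`, `X(v) = e₃ - v₃ v` and `J` the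
infinitesimal rotation about the third axis. `X` and `J` commute, since `J` kills `e₃` and takes
values in the plane `v₃ = 0`; for the same reason `J` is tangent to the level sets of `φ`. The product
rule for the bracket then leaves only `φ (Dφ · X) J = φ · v₃ φ · J`.
-/

lemma lieBracket_eq_vectorField_lieBracket {E : Type*} [NormedAddCommGroup E] [NormedSpace ℝ E]
    (V W : E → E) : lieBracket V W = VectorField.lieBracket ℝ V W := rfl

section

variable {E : Type*} [NormedAddCommGroup E] [NormedSpace ℝ E]

lemma hasFDerivAt_const_sub_smul_self (a : E) (ℓ : E →L[ℝ] ℝ) (x : E) :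
    HasFDerivAt (fun y => a - ℓ y • y) (-(ℓ x • ContinuousLinearMap.id ℝ E + ℓ.smulRight x)) x :=
  (ℓ.hasFDerivAt.smul (hasFDerivAt_id x)).const_sub a

lemma lieBracket_const_sub_smul_self_clm {a : E} {ℓ : E →L[ℝ] ℝ} {J : E →L[ℝ] E}
    (hJa : J a = 0) (hℓJ : ∀ y, ℓ (J y) = 0) (x : E) :
    VectorField.lieBracket ℝ (fun y => a - ℓ y • y) J x = 0 := by
  rw [VectorField.lieBracket, J.fderiv, (hasFDerivAt_const_sub_smul_self a ℓ x).fderiv]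
  simp [hJa, hℓJ]

lemma lieBracket_smul_const_sub_smul_self_smul_clm {a : E} {ℓ : E →L[ℝ] ℝ} {J : E →L[ℝ] E}
    (hJa : J a = 0) (hℓJ : ∀ y, ℓ (J y) = 0) {g : ℝ → ℝ} {g' : ℝ} {x : E}
    (hg : HasDerivAt g g' (ℓ x)) :
    VectorField.lieBracket ℝ (fun y => g (ℓ y) • (a - ℓ y • y)) (fun y => g (ℓ y) • J y) x =
      (g (ℓ x) * g' * (ℓ a - ℓ x ^ 2)) • J x := by
  have hf : HasFDerivAt (fun y => g (ℓ y)) (g' • ℓ) x := hg.comp_hasFDerivAt x ℓ.hasFDerivAt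
  rw [VectorField.lieBracket_smul_left hf.differentiableAt
      (hasFDerivAt_const_sub_smul_self a ℓ x).differentiableAt,
    VectorField.lieBracket_smul_right hf.differentiableAt J.differentiableAt,
    lieBracket_const_sub_smul_self_clm hJa hℓJ, hf.fderiv]
  simp only [smul_apply, map_smul, map_sub, hℓJ, smul_eq_mul, mul_zero,
    neg_zero, zero_smul, smul_zero, zero_add, add_zero]
  module

end

lemma hasDerivAt_inv_sqrt_one_sub_sq {t : ℝ} (ht : t ^ 2 < 1) :
    HasDerivAt (fun s => (√(1 - s ^ 2))⁻¹) (t / √(1 - t ^ 2) ^ 3) t := by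
  have hpos : 0 < 1 - t ^ 2 := by linarith
  have h := ((hasDerivAt_pow 2 t).const_sub 1).sqrt hpos.ne' |>.inv (Real.sqrt_pos.2 hpos).ne'
  refine h.congr_deriv ?_
  field_simp
  norm_num

/-- For every `v ∈ ℝ³` with `v₃² < 1`,
`[e₄, e₅](v) = (v₃/√(1−v₃²)) · e₅(v)`. -/
theorem statement3 (v : Fin 3 → ℝ) (hv : (v 2) ^ 2 < 1) :
    lieBracket e₄ e₅ v = (v 2 / Real.sqrt (1 - (v 2) ^ 2)) • e₅ v := by
  set ℓ : (Fin 3 → ℝ) →L[ℝ] ℝ := ContinuousLinearMap.proj 2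
  set J : (Fin 3 → ℝ) →L[ℝ] (Fin 3 → ℝ) :=
    ContinuousLinearMap.pi ![-ContinuousLinearMap.proj 1, ContinuousLinearMap.proj 0, 0]
  have h₄ : e₄ = fun y => (√(1 - ℓ y ^ 2))⁻¹ • (![0, 0, 1] - ℓ y • y) := by
    funext y; rw [e₄]; congr 1; ext i; fin_cases i <;> simp [ℓ]; ring
  have h₅ : e₅ = fun y => (√(1 - ℓ y ^ 2))⁻¹ • J y := by
    funext y; ext i; fin_cases i <;> simp [e₅, J, ℓ]
  rw [lieBracket_eq_vectorField_lieBracket, h₄, h₅,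
    lieBracket_smul_const_sub_smul_self_smul_clm (by ext i; fin_cases i <;> simp [J])
      (fun y => by simp [ℓ, J]) (hasDerivAt_inv_sqrt_one_sub_sq hv), smul_smul]
  have hpos : 0 < 1 - v 2 ^ 2 := by linarith
  have hsq : √(1 - v 2 ^ 2) ^ 2 = 1 - v 2 ^ 2 := Real.sq_sqrt hpos.le
  congr 1
  simp [ℓ]
  field_simp
  rw [hsq]
end

section
/- Let x₃ ∈ ℝ and v = (v₁,v₂,v₃) ∈ ℝ³ with v₁² + v₂² + v₃² = 1 and v₃² ≠ 1, and set α = −v₃v₁ sin x₃ + v₃v₂ cos x₃. Then (−v₃ sin x₃ − α v₁, v₃ cos x₃ − α v₂, −α v₃) = (v₃²(v₁ sin x₃ − v₂ cos x₃)/√(1−v₃²)) · e₄(v) + (v₃(v₂ sin x₃ + v₁ cos x₃)/√(1−v₃²)) · e₅(v). -/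
lemma one_sub_sq_pos_of_sq_add_sq_add_sq_eq_one {a b c : ℝ} (h : a ^ 2 + b ^ 2 + c ^ 2 = 1)
    (hc : c ^ 2 ≠ 1) : 0 < 1 - c ^ 2 :=
  sub_pos.2 <| lt_of_le_of_ne (by nlinarith [sq_nonneg a, sq_nonneg b]) hc

lemma sub_dotProduct_smul_eq_e₄_add_e₅ {v : Fin 3 → ℝ}
    (hv : v 0 ^ 2 + v 1 ^ 2 + v 2 ^ 2 = 1) (hv3 : v 2 ^ 2 ≠ 1) (p : Fin 3 → ℝ) :
    p - (p ⬝ᵥ v) • v = (p ⬝ᵥ e₄ v) • e₄ v + (p ⬝ᵥ e₅ v) • e₅ v := by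
  have hc := one_sub_sq_pos_of_sq_add_sq_add_sq_eq_one hv hv3
  have hs : Real.sqrt (1 - v 2 ^ 2) ^ 2 = 1 - v 2 ^ 2 := Real.sq_sqrt hc.le
  simp only [e₄, e₅, dotProduct_smul, smul_smul, smul_eq_mul]
  ext i
  fin_cases i <;>
    simp only [dotProduct, Fin.sum_univ_three, Fin.isValue, Fin.zero_eta, Fin.mk_one, Fin.reduceFinMk,
      Pi.sub_apply, Pi.add_apply, Pi.smul_apply, smul_eq_mul, neg_mul, mul_neg, mul_zero, add_zero,
      Matrix.cons_val_zero, Matrix.cons_val_one, Matrix.cons_val, Matrix.smul_cons] <;>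
    field_simp <;> rw [hs]
  · linear_combination (-p 0) * hv
  · linear_combination (-p 1) * hv
  · ring

/-- For `x₃ ∈ ℝ` and unit `v ∈ ℝ³` with `v₃² ≠ 1`, and
`α = −v₃v₁ sin x₃ + v₃v₂ cos x₃`, one has
`(−v₃ sin x₃ − α v₁, v₃ cos x₃ − α v₂, −α v₃)
  = (v₃²(v₁ sin x₃ − v₂ cos x₃)/√(1−v₃²))·e₄(v)
    + (v₃(v₂ sin x₃ + v₁ cos x₃)/√(1−v₃²))·e₅(v)`. -/
theorem statement4 (x₃ : ℝ) (v : Fin 3 → ℝ) (α : ℝ)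
    (hα : α = -(v 2) * v 0 * Real.sin x₃ + v 2 * v 1 * Real.cos x₃)
    (hv : (v 0) ^ 2 + (v 1) ^ 2 + (v 2) ^ 2 = 1) (hv3 : (v 2) ^ 2 ≠ 1) :
    ![-(v 2) * Real.sin x₃ - α * v 0, v 2 * Real.cos x₃ - α * v 1, -(α * v 2)]
      = ((v 2) ^ 2 * (v 0 * Real.sin x₃ - v 1 * Real.cos x₃) / Real.sqrt (1 - (v 2) ^ 2)) • e₄ v
        + (v 2 * (v 1 * Real.sin x₃ + v 0 * Real.cos x₃) / Real.sqrt (1 - (v 2) ^ 2)) • e₅ v := by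
  set p : Fin 3 → ℝ := ![-(v 2) * Real.sin x₃, v 2 * Real.cos x₃, 0]
  have hαp : α = p ⬝ᵥ v := by
    simp only [hα, p, dotProduct, Fin.sum_univ_three, Matrix.cons_val]; ring
  have hp₄ : p ⬝ᵥ e₄ v
      = (v 2) ^ 2 * (v 0 * Real.sin x₃ - v 1 * Real.cos x₃) / Real.sqrt (1 - (v 2) ^ 2) := by
    simp only [e₄, p, dotProduct, Fin.sum_univ_three, Pi.smul_apply, smul_eq_mul, Matrix.cons_val]
    ring
  have hp₅ : p ⬝ᵥ e₅ v
      = v 2 * (v 1 * Real.sin x₃ + v 0 * Real.cos x₃) / Real.sqrt (1 - (v 2) ^ 2) := by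
    simp only [e₅, p, dotProduct, Fin.sum_univ_three, Pi.smul_apply, smul_eq_mul, Matrix.cons_val]
    ring
  calc ![-(v 2) * Real.sin x₃ - α * v 0, v 2 * Real.cos x₃ - α * v 1, -(α * v 2)]
      = p - α • v := by
        ext i; fin_cases i <;> simp [p]
    _ = _ := by rw [hαp, sub_dotProduct_smul_eq_e₄_add_e₅ hv hv3, hp₄, hp₅]
end

section
/- Let ε > 0 with ε² < 1/2 and t₀ ≥ 0. Suppose u, w : [0, t₀] → ℝ are differentiable with u'(s) = −w(s)·u(s)² and w'(s) = u(s)·(1 − w(s)²) for all s ∈ [0, t₀], that u(0) = ε, w(0) = −ε, w(t₀) = 0, that −ε ≤ w(s) ≤ 0 for all s ∈ [0, t₀], and that u(s)² ≤ 1 for all s ∈ [0, t₀]. Then t₀ ≤ 1/(1 − ε²) and u(t₀) < 3ε. -/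
/-!
Since `w ≤ 0`, `u` is nondecreasing, so `u ≥ ε`; together with `w² ≤ ε²` this gives
`w' ≥ ε (1 - ε²)`, and as `w` rises only by `ε` on `[0, t₀]`, `t₀ ≤ 1 / (1 - ε²) < 2`.
Finally `u' = -w u² ≤ ε`, so `u t₀ ≤ ε + ε t₀ < 3ε`.
-/

open Set

section DerivBounds

variable {f f' : ℝ → ℝ} {a b C : ℝ}

theorem mul_sub_le_image_sub_of_le_hasDerivWithinAt_Icc
    (hf : ∀ x ∈ Icc a b, HasDerivWithinAt f (f' x) (Icc a b) x)
    (hC : ∀ x ∈ Icc a b, C ≤ f' x) {x y : ℝ} (hx : x ∈ Icc a b) (hy : y ∈ Icc a b)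
    (hxy : x ≤ y) : C * (y - x) ≤ f y - f x := by
  have hg : ∀ z ∈ Icc a b, HasDerivWithinAt (fun z => f z - C * z) (f' z - C) (Icc a b) z :=
    fun z hz => by simpa using (hf z hz).fun_sub ((hasDerivWithinAt_id z _).const_mul C)
  have hmono : MonotoneOn (fun z => f z - C * z) (Icc a b) :=
    monotoneOn_of_hasDerivWithinAt_nonneg (convex_Icc a b)
      (fun z hz => (hg z hz).continuousWithinAt)
      (fun z hz => (hg z (interior_subset hz)).mono interior_subset)
      (fun z hz => sub_nonneg.mpr (hC z (interior_subset hz)))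
  have := hmono hx hy hxy
  simp only at this
  linarith

theorem image_sub_le_mul_sub_of_hasDerivWithinAt_Icc_le
    (hf : ∀ x ∈ Icc a b, HasDerivWithinAt f (f' x) (Icc a b) x)
    (hC : ∀ x ∈ Icc a b, f' x ≤ C) {x y : ℝ} (hx : x ∈ Icc a b) (hy : y ∈ Icc a b)
    (hxy : x ≤ y) : f y - f x ≤ C * (y - x) := by
  have := mul_sub_le_image_sub_of_le_hasDerivWithinAt_Icc (f := -f) (f' := -f') (C := -C)
    (fun z hz => (hf z hz).neg) (fun z hz => neg_le_neg (hC z hz)) hx hy hxy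
  simp only [Pi.neg_apply] at this
  linarith

end DerivBounds

/-- Let `ε > 0` with `ε² < 1/2` and `t₀ ≥ 0`. If on `[0,t₀]` the functions
`u, w` solve `u' = −w·u²`, `w' = u·(1 − w²)`, with `u(0) = ε`, `w(0) = −ε`, `w(t₀) = 0`,
`−ε ≤ w ≤ 0` and `u² ≤ 1` throughout, then `t₀ ≤ 1/(1 − ε²)` and `u(t₀) < 3ε`. -/
theorem statement19 (ε : ℝ) (hε : 0 < ε) (hε2 : ε ^ 2 < 1 / 2)
    (t₀ : ℝ) (ht₀ : 0 ≤ t₀) (u w : ℝ → ℝ)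
    (hu : ∀ s ∈ Set.Icc 0 t₀, HasDerivWithinAt u (-w s * u s ^ 2) (Set.Icc 0 t₀) s)
    (hw : ∀ s ∈ Set.Icc 0 t₀, HasDerivWithinAt w (u s * (1 - w s ^ 2)) (Set.Icc 0 t₀) s)
    (hu0 : u 0 = ε) (hw0 : w 0 = -ε) (hwt : w t₀ = 0)
    (hwb : ∀ s ∈ Set.Icc 0 t₀, -ε ≤ w s ∧ w s ≤ 0)
    (hub : ∀ s ∈ Set.Icc 0 t₀, u s ^ 2 ≤ 1) :
    t₀ ≤ 1 / (1 - ε ^ 2) ∧ u t₀ < 3 * ε := by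
  have h0 : (0 : ℝ) ∈ Icc 0 t₀ := ⟨le_rfl, ht₀⟩
  have ht : t₀ ∈ Icc 0 t₀ := ⟨ht₀, le_rfl⟩
  have hu_ge : ∀ s ∈ Icc 0 t₀, ε ≤ u s := fun s hs => by
    have := mul_sub_le_image_sub_of_le_hasDerivWithinAt_Icc (C := 0) hu
      (fun x hx => by nlinarith [(hwb x hx).2, sq_nonneg (u x)]) h0 hs hs.1
    linarith
  have hw_rise := mul_sub_le_image_sub_of_le_hasDerivWithinAt_Icc (C := ε * (1 - ε ^ 2)) hw
    (fun x hx => by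
      obtain ⟨hlo, hhi⟩ := hwb x hx
      have hwsq : w x ^ 2 ≤ ε ^ 2 := by nlinarith
      nlinarith [hu_ge x hx]) h0 ht ht₀
  have hu_rise := image_sub_le_mul_sub_of_hasDerivWithinAt_Icc_le (C := ε) hu
    (fun x hx => by nlinarith [hwb x hx, hub x hx, sq_nonneg (u x)]) h0 ht ht₀
  rw [hw0, hwt] at hw_rise
  rw [hu0] at hu_rise
  have ht₀_bound : (1 - ε ^ 2) * t₀ ≤ 1 := by nlinarith
  refine ⟨by rw [le_div_iff₀ (by linarith)]; linarith, ?_⟩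
  have ht₀_lt_two : t₀ < 2 := by nlinarith
  linarith [mul_lt_mul_of_pos_left ht₀_lt_two hε]
end
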